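/- With Σ positive definite and μ₀ ≠ μ₁, the maximal success probability Φ(d/2) for equal-prior binary hypothesis testing between N(μ₀, Σ) and N(μ₁, Σ), where d = √((μ₀ − μ₁)ᵀ Σ⁻¹ (μ₀ − μ₁)), is strictly greater than ½. Hence whenever the two scenarios produce different mean outputs, there exists a measurable decision rule that distinguishes them strictly better than uniform random guessing. -/

import Mathlib

open MeasureTheory Matrix

/-- The multivariate Gaussian density with mean `μ` and positive-definite covariance `S`. -/
noncomputable def gaussPdf {T : ℕ} (μ : Fin T → ℝ) (S : Matrix (Fin T) (Fin T) ℝ)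
    (y : Fin T → ℝ) : ℝ :=
  (2 * Real.pi) ^ (-(T : ℝ) / 2) * S.det ^ (-(1 : ℝ) / 2) *
    Real.exp (-(1 / 2) * ((y - μ) ⬝ᵥ (S⁻¹ *ᵥ (y - μ))))

/-- The multivariate Gaussian measure `N(μ, S)` on `ℝ^T`. -/
noncomputable def gaussMeasure {T : ℕ} (μ : Fin T → ℝ) (S : Matrix (Fin T) (Fin T) ℝ) :
    Measure (Fin T → ℝ) :=
  volume.withDensity fun y => ENNReal.ofReal (gaussPdf μ S y)

/-- The standard normal cumulative distribution function `Φ`. -/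
noncomputable def stdNormalCDF (x : ℝ) : ℝ :=
  ∫ t in Set.Iic x, Real.exp (-t ^ 2 / 2) / Real.sqrt (2 * Real.pi)



section Aux
open Real


lemma phi_eq : (fun t : ℝ => Real.exp (-t ^ 2 / 2) / Real.sqrt (2 * Real.pi))
    = fun t => Real.exp (-(1/2) * t ^ 2) / Real.sqrt (2 * Real.pi) := by
  funext t; ring_nf

lemma phi_integrable : Integrable (fun t : ℝ => Real.exp (-t ^ 2 / 2) / Real.sqrt (2 * Real.pi)) := by
  rw [phi_eq]
  exact (integrable_exp_neg_mul_sq (by norm_num)).div_const _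

lemma phi_integral : ∫ t : ℝ, Real.exp (-t ^ 2 / 2) / Real.sqrt (2 * Real.pi) = 1 := by
  rw [phi_eq]
  rw [integral_div, integral_gaussian]
  rw [div_eq_one_iff_eq (by positivity)]
  congr 1; ring

lemma phi_pos (t : ℝ) : 0 < Real.exp (-t ^ 2 / 2) / Real.sqrt (2 * Real.pi) := by
  have : (0:ℝ) < Real.pi := Real.pi_pos
  positivity

lemma stdNormalCDF_zero : stdNormalCDF 0 = 1 / 2 := by
  set φ := fun t : ℝ => Real.exp (-t ^ 2 / 2) / Real.sqrt (2 * Real.pi) with hφ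
  have hsymm : ∫ t in Set.Iic (0:ℝ), φ t = ∫ t in Set.Ioi (0:ℝ), φ t := by
    rw [← neg_zero, ← integral_comp_neg_Iic (0:ℝ) φ, neg_zero]
    apply setIntegral_congr_fun measurableSet_Iic
    intro t _; simp [φ]
  have hsplit : (∫ t in Set.Iic (0:ℝ), φ t) + ∫ t in Set.Ioi (0:ℝ), φ t = ∫ t : ℝ, φ t := by
    rw [← MeasureTheory.setIntegral_union (by simp [Set.disjoint_left]) measurableSet_Ioi
      phi_integrable.integrableOn phi_integrable.integrableOn, Set.Iic_union_Ioi]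
    rw [setIntegral_univ]
  have h1 : (2:ℝ) * ∫ t in Set.Iic (0:ℝ), φ t = 1 := by
    rw [two_mul]
    nth_rewrite 2 [hsymm]
    rw [hsplit, phi_integral]
  unfold stdNormalCDF
  linarith

lemma stdNormalCDF_pos_half {x : ℝ} (hx : 0 < x) : 1 / 2 < stdNormalCDF x := by
  set φ := fun t : ℝ => Real.exp (-t ^ 2 / 2) / Real.sqrt (2 * Real.pi) with hφ
  have hsplit : stdNormalCDF x = stdNormalCDF 0 + ∫ t in Set.Ioc (0:ℝ) x, φ t := by
    unfold stdNormalCDF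
    rw [← MeasureTheory.setIntegral_union (Set.Iic_disjoint_Ioc le_rfl)
      measurableSet_Ioc phi_integrable.integrableOn phi_integrable.integrableOn]
    rw [Set.Iic_union_Ioc_eq_Iic hx.le]
  have hpos : 0 < ∫ t in Set.Ioc (0:ℝ) x, φ t := by
    rw [MeasureTheory.setIntegral_pos_iff_support_of_nonneg_ae]
    · have : Function.support φ = Set.univ := by
        ext t; simp [Function.mem_support, (phi_pos t).ne']; exact (phi_pos t).ne'
      rw [this, Set.univ_inter]
      simp [hx]
    · exact Filter.Eventually.of_forall fun t => (phi_pos t).le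
    · exact phi_integrable.integrableOn
  rw [hsplit, stdNormalCDF_zero]
  linarith

variable {T : ℕ} {S : Matrix (Fin T) (Fin T) ℝ}

lemma quad_continuous (μ : Fin T → ℝ) (S : Matrix (Fin T) (Fin T) ℝ) :
    Continuous (fun y : Fin T → ℝ => (y - μ) ⬝ᵥ (S⁻¹ *ᵥ (y - μ))) := by
  simp only [dotProduct, mulVec, dotProduct]
  fun_prop

lemma gaussPdf_continuous (μ : Fin T → ℝ) : Continuous (gaussPdf μ S) := by
  unfold gaussPdf
  exact continuous_const.mul (continuous_const.mul (quad_continuous μ S)).rexp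

lemma gaussPdf_pos (μ : Fin T → ℝ) (y : Fin T → ℝ) (hS : S.PosDef) : 0 < gaussPdf μ S y := by
  unfold gaussPdf
  have h1 : (0:ℝ) < 2 * Real.pi := by positivity
  have h2 : (0:ℝ) < S.det := hS.det_pos
  positivity

open scoped MatrixOrder in
noncomputable def Matrix.PosSemidef.sqrt {n : Type*} [Fintype n] [DecidableEq n]
    {A : Matrix n n ℝ} (_ : A.PosSemidef) : Matrix n n ℝ := CFC.sqrt A

open scoped MatrixOrder in
lemma Matrix.PosSemidef.posSemidef_sqrt {n : Type*} [Fintype n] [DecidableEq n]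
    {A : Matrix n n ℝ} (hA : A.PosSemidef) : hA.sqrt.PosSemidef :=
  (CFC.sqrt_nonneg A).posSemidef

open scoped MatrixOrder in
lemma Matrix.PosSemidef.sqrt_mul_self {n : Type*} [Fintype n] [DecidableEq n]
    {A : Matrix n n ℝ} (hA : A.PosSemidef) : hA.sqrt * hA.sqrt = A :=
  CFC.sqrt_mul_sqrt_self A hA.nonneg

-- key change of variables: A = sqrt of S
lemma sqrt_quad (hS : S.PosDef) (x : Fin T → ℝ) :
    (hS.posSemidef.sqrt *ᵥ x) ⬝ᵥ (S⁻¹ *ᵥ (hS.posSemidef.sqrt *ᵥ x)) = x ⬝ᵥ x := by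
  set A := hS.posSemidef.sqrt with hA
  have hAH : Aᵀ = A := hS.posSemidef.posSemidef_sqrt.isHermitian
  have hAA : A * A = S := hS.posSemidef.sqrt_mul_self
  have hdetS : S.det ≠ 0 := hS.det_pos.ne'
  have hdetA : A.det ≠ 0 := by
    intro h
    apply hdetS
    rw [← hAA, det_mul, h, mul_zero]
  have key : A * S⁻¹ * A = 1 := by
    rw [← hAA, Matrix.mul_inv_rev]
    calc A * (A⁻¹ * A⁻¹) * A = (A * A⁻¹) * (A⁻¹ * A) := by simp only [mul_assoc]
    _ = 1 := by rw [Matrix.mul_nonsing_inv _ hdetA.isUnit, Matrix.nonsing_inv_mul _ hdetA.isUnit, one_mul]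
  have hxa : A *ᵥ x = x ᵥ* A := by
    conv_lhs => rw [← hAH]
    rw [Matrix.mulVec_transpose]
  calc (A *ᵥ x) ⬝ᵥ (S⁻¹ *ᵥ (A *ᵥ x))
      = (x ᵥ* A) ⬝ᵥ ((S⁻¹ * A) *ᵥ x) := by rw [mulVec_mulVec, hxa]
    _ = ((x ᵥ* A) ᵥ* (S⁻¹ * A)) ⬝ᵥ x := by rw [dotProduct_mulVec]
    _ = (x ᵥ* (A * S⁻¹ * A)) ⬝ᵥ x := by rw [vecMul_vecMul, mul_assoc]
    _ = x ⬝ᵥ x := by rw [key, vecMul_one]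

lemma det_sqrt_sq (hS : S.PosDef) :
    hS.posSemidef.sqrt.det ^ 2 = S.det := by
  rw [sq, ← det_mul, hS.posSemidef.sqrt_mul_self]

lemma centered_integrable_and_integral (hS : S.PosDef) :
    Integrable (fun y : Fin T → ℝ => Real.exp (-(1/2) * (y ⬝ᵥ (S⁻¹ *ᵥ y))))
      ∧ ∫ y : Fin T → ℝ, Real.exp (-(1/2) * (y ⬝ᵥ (S⁻¹ *ᵥ y)))
        = |hS.posSemidef.sqrt.det| * Real.sqrt (2 * Real.pi) ^ T := by
  set A := hS.posSemidef.sqrt with hA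
  have hdetA : A.det ≠ 0 := by
    intro h
    exact hS.det_pos.ne' (by rw [← hS.posSemidef.sqrt_mul_self, det_mul, ← hA, h, mul_zero])
  set f := fun y : Fin T → ℝ => Real.exp (-(1/2) * (y ⬝ᵥ (S⁻¹ *ᵥ y))) with hf
  have hfcont : Continuous f := by
    apply Continuous.rexp
    apply Continuous.mul continuous_const
    simp only [dotProduct, mulVec, dotProduct]
    fun_prop
  have hmap : Measure.map (toLin' A) volume
      = ENNReal.ofReal |A.det|⁻¹ • (volume : Measure (Fin T → ℝ)) := by
    have := Real.map_matrix_volume_pi_eq_smul_volume_pi hdetA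
    rwa [abs_inv] at this
  have hcomp : (fun x : Fin T → ℝ => f (toLin' A x)) = fun x => ∏ i, Real.exp (-x i ^ 2 / 2) := by
    funext x
    have : toLin' A x = A *ᵥ x := rfl
    rw [hf, this]
    simp only
    rw [sqrt_quad hS]
    rw [← Real.exp_sum]
    congr 1
    rw [dotProduct, Finset.mul_sum]
    congr 1; funext i; ring
  have hint1d : Integrable (fun t : ℝ => Real.exp (-t ^ 2 / 2)) := by
    have := integrable_exp_neg_mul_sq (show (0:ℝ) < 1/2 by norm_num)
    convert this using 2 with t
    ring_nf
  have hintprod : Integrable (fun x : Fin T → ℝ => ∏ i, Real.exp (-x i ^ 2 / 2)) :=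
    Integrable.fintype_prod (f := fun (_ : Fin T) (t : ℝ) => Real.exp (-t ^ 2 / 2)) (fun _ => hint1d)
  have hTmeas : AEMeasurable (toLin' A) (volume : Measure (Fin T → ℝ)) :=
    (toLin' A).continuous_of_finiteDimensional.measurable.aemeasurable
  have hfmeas : AEStronglyMeasurable f (Measure.map (toLin' A) volume) :=
    hfcont.aestronglyMeasurable
  have hintmap : Integrable f (Measure.map (toLin' A) volume) := by
    rw [integrable_map_measure hfmeas hTmeas]
    rw [show (f ∘ toLin' A) = fun x => ∏ i, Real.exp (-x i ^ 2 / 2) from hcomp]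
    exact hintprod
  have hintf : Integrable f := by
    rw [hmap] at hintmap
    have := hintmap.smul_measure (c := ENNReal.ofReal |A.det|)
      (by simp [ENNReal.ofReal_ne_top])
    rwa [smul_smul, ← ENNReal.ofReal_mul (abs_nonneg _),
      mul_inv_cancel₀ (abs_ne_zero.mpr hdetA), ENNReal.ofReal_one, one_smul] at this
  refine ⟨hintf, ?_⟩
  have heq1 : ∫ y, f y ∂(Measure.map (toLin' A) volume) = ∫ x, f (toLin' A x) := by
    exact integral_map hTmeas hfmeas
  rw [hmap] at heq1
  rw [integral_smul_measure] at heq1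
  rw [ENNReal.toReal_ofReal (by positivity)] at heq1
  have heq2 : ∫ x : Fin T → ℝ, f (toLin' A x) = Real.sqrt (2 * Real.pi) ^ T := by
    rw [show (fun x : Fin T → ℝ => f (toLin' A x)) = fun x => ∏ i, Real.exp (-x i ^ 2 / 2) from hcomp]
    rw [MeasureTheory.integral_fintype_prod_volume_eq_pow (ι := Fin T) (fun t : ℝ => Real.exp (-t ^ 2 / 2))]
    congr 1
    · have : (fun t : ℝ => Real.exp (-t ^ 2 / 2)) = fun t => Real.exp (-(1/2) * t ^ 2) := by
        funext t; ring_nf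
      rw [this, integral_gaussian]
      rw [show Real.pi / (1/2) = 2 * Real.pi by ring]
    · simp
  rw [heq2, smul_eq_mul] at heq1
  field_simp at heq1 ⊢
  linarith [heq1]

lemma gaussPdf_shift (μ : Fin T → ℝ) (y : Fin T → ℝ) :
    gaussPdf μ S y = (2 * Real.pi) ^ (-(T : ℝ) / 2) * S.det ^ (-(1 : ℝ) / 2) *
      Real.exp (-(1/2) * ((y - μ) ⬝ᵥ (S⁻¹ *ᵥ (y - μ)))) := rfl

lemma gaussPdf_integrable (hS : S.PosDef) (μ : Fin T → ℝ) :
    Integrable (gaussPdf μ S) := by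
  have h := (centered_integrable_and_integral hS).1
  have : Integrable (fun y : Fin T → ℝ =>
      Real.exp (-(1/2) * ((y - μ) ⬝ᵥ (S⁻¹ *ᵥ (y - μ))))) := h.comp_sub_right μ
  exact (this.const_mul _)

lemma gaussPdf_integral (hS : S.PosDef) (μ : Fin T → ℝ) :
    ∫ y : Fin T → ℝ, gaussPdf μ S y = 1 := by
  have hdS : (0:ℝ) < S.det := hS.det_pos
  have h2π : (0:ℝ) < 2 * Real.pi := by positivity
  obtain ⟨hint, hval⟩ := centered_integrable_and_integral hS
  have hdetA : |hS.posSemidef.sqrt.det| = Real.sqrt S.det := by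
    rw [← det_sqrt_sq hS, Real.sqrt_sq_eq_abs]
  unfold gaussPdf
  rw [MeasureTheory.integral_const_mul]
  rw [show (∫ y : Fin T → ℝ, Real.exp (-(1/2:ℝ) * ((y - μ) ⬝ᵥ (S⁻¹ *ᵥ (y - μ)))))
      = ∫ y : Fin T → ℝ, Real.exp (-(1/2:ℝ) * (y ⬝ᵥ (S⁻¹ *ᵥ y))) from
    integral_sub_right_eq_self (fun y : Fin T → ℝ => Real.exp (-(1/2:ℝ) * (y ⬝ᵥ (S⁻¹ *ᵥ y)))) μ]
  rw [hval, hdetA]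
  rw [Real.sqrt_eq_rpow, Real.sqrt_eq_rpow,
    ← Real.rpow_natCast ((2 * Real.pi) ^ ((1:ℝ)/2)) T, ← Real.rpow_mul h2π.le]
  rw [show ((2:ℝ) * Real.pi) ^ (-(T:ℝ)/2) * S.det ^ (-(1:ℝ)/2) *
      (S.det ^ ((1:ℝ)/2) * (2 * Real.pi) ^ ((1:ℝ)/2 * T)) =
      (((2:ℝ) * Real.pi) ^ (-(T:ℝ)/2) * (2 * Real.pi) ^ ((1:ℝ)/2 * T)) *
      (S.det ^ (-(1:ℝ)/2) * S.det ^ ((1:ℝ)/2)) by ring]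
  rw [← Real.rpow_add h2π, ← Real.rpow_add hdS]
  rw [show -(T:ℝ)/2 + 1/2 * T = 0 by ring, show -(1:ℝ)/2 + 1/2 = 0 by ring]
  norm_num

lemma gaussMeasure_apply {T : ℕ} {S : Matrix (Fin T) (Fin T) ℝ} (hS : S.PosDef)
    (μ : Fin T → ℝ) {M : Set (Fin T → ℝ)} (hM : MeasurableSet M) :
    (gaussMeasure μ S M).toReal = ∫ y in M, gaussPdf μ S y := by
  unfold gaussMeasure
  rw [withDensity_apply _ hM]
  rw [← ofReal_integral_eq_lintegral_ofReal ((gaussPdf_integrable hS μ).integrableOn)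
    (Filter.Eventually.of_forall fun y => (gaussPdf_pos μ y hS).le)]
  exact ENNReal.toReal_ofReal (setIntegral_nonneg hM fun y _ => (gaussPdf_pos μ y hS).le)

lemma bilin_symm (hS : S.PosDef) (u v : Fin T → ℝ) :
    u ⬝ᵥ (S⁻¹ *ᵥ v) = v ⬝ᵥ (S⁻¹ *ᵥ u) := by
  have hH : S⁻¹ᵀ = S⁻¹ := by
    have := hS.inv.isHermitian
    simpa [Matrix.IsHermitian, conjTranspose_eq_transpose_of_trivial] using this
  rw [dotProduct_mulVec, ← Matrix.mulVec_transpose, hH, dotProduct_comm]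

theorem main_second (hS : S.PosDef) (μ₀ μ₁ : Fin T → ℝ) (hμ : μ₀ ≠ μ₁) :
    ∃ M : Set (Fin T → ℝ), MeasurableSet M ∧
      1 / 2 < (1 / 2) * (gaussMeasure μ₀ S Mᶜ).toReal +
        (1 / 2) * (gaussMeasure μ₁ S M).toReal := by
  have hdet : S.det ≠ 0 := hS.det_pos.ne'
  set δ := μ₁ - μ₀ with hδdef
  have hδ : δ ≠ 0 := sub_ne_zero.mpr (Ne.symm hμ)
  set u := δ ᵥ* S⁻¹ with hu
  have hu0 : u ≠ 0 := by
    intro h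
    apply hδ
    have h2 : u ᵥ* S = δ := by
      rw [hu, vecMul_vecMul, Matrix.nonsing_inv_mul _ hdet.isUnit, vecMul_one]
    rw [← h2, h, zero_vecMul]
  set c : ℝ := (u ⬝ᵥ (μ₀ + μ₁)) / 2 with hc
  set M : Set (Fin T → ℝ) := {y | c < u ⬝ᵥ y} with hM
  have hcont : Continuous (fun y : Fin T → ℝ => u ⬝ᵥ y) := by
    simp only [dotProduct]
    fun_prop
  have hopen : IsOpen M := isOpen_lt continuous_const hcont
  have hMmeas : MeasurableSet M := hopen.measurableSet
  have hne : M.Nonempty := by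
    obtain ⟨i, hi⟩ := Function.ne_iff.mp hu0
    refine ⟨Pi.single i ((c + 1) / u i), ?_⟩
    simp only [hM, Set.mem_setOf_eq, dotProduct_single]
    rw [mul_div_cancel₀ _ (by simpa using hi)]
    linarith
  have hvolM : 0 < volume M := hopen.measure_pos volume hne
  -- pointwise comparison on M
  have hpt : ∀ y ∈ M, gaussPdf μ₀ S y < gaussPdf μ₁ S y := by
    intro y hy
    have hyM : c < u ⬝ᵥ y := hy
    have hq : (y - μ₁) ⬝ᵥ (S⁻¹ *ᵥ (y - μ₁)) < (y - μ₀) ⬝ᵥ (S⁻¹ *ᵥ (y - μ₀)) := by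
      have e0 : (y - μ₀) ⬝ᵥ (S⁻¹ *ᵥ (y - μ₀)) =
          y ⬝ᵥ (S⁻¹ *ᵥ y) - 2 * (μ₀ ⬝ᵥ (S⁻¹ *ᵥ y)) + μ₀ ⬝ᵥ (S⁻¹ *ᵥ μ₀) := by
        simp only [mulVec_sub, dotProduct_sub, sub_dotProduct]
        rw [bilin_symm hS y μ₀]
        ring
      have e1 : (y - μ₁) ⬝ᵥ (S⁻¹ *ᵥ (y - μ₁)) =
          y ⬝ᵥ (S⁻¹ *ᵥ y) - 2 * (μ₁ ⬝ᵥ (S⁻¹ *ᵥ y)) + μ₁ ⬝ᵥ (S⁻¹ *ᵥ μ₁) := by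
        simp only [mulVec_sub, dotProduct_sub, sub_dotProduct]
        rw [bilin_symm hS y μ₁]
        ring
      have huy : u ⬝ᵥ y = μ₁ ⬝ᵥ (S⁻¹ *ᵥ y) - μ₀ ⬝ᵥ (S⁻¹ *ᵥ y) := by
        rw [hu, ← dotProduct_mulVec, hδdef, sub_dotProduct]
      have hcval : 2 * c = μ₁ ⬝ᵥ (S⁻¹ *ᵥ μ₁) - μ₀ ⬝ᵥ (S⁻¹ *ᵥ μ₀) := by
        rw [hc, hu, ← dotProduct_mulVec, hδdef]
        simp only [mulVec_add, dotProduct_add, sub_dotProduct]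
        rw [bilin_symm hS μ₁ μ₀]
        ring
      rw [e0, e1]
      have h2 : 2 * c < 2 * (u ⬝ᵥ y) := by linarith
      rw [huy] at h2
      linarith
    unfold gaussPdf
    have hC : (0:ℝ) < (2 * Real.pi) ^ (-(T : ℝ) / 2) * S.det ^ (-(1 : ℝ) / 2) := by
      have h1 : (0:ℝ) < 2 * Real.pi := by positivity
      have h2 : (0:ℝ) < S.det := hS.det_pos
      positivity
    apply mul_lt_mul_of_pos_left _ hC
    apply Real.exp_lt_exp.mpr
    nlinarith [hq]
  -- integral comparison
  have hint0 : IntegrableOn (gaussPdf μ₀ S) M := (gaussPdf_integrable hS μ₀).integrableOn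
  have hint1 : IntegrableOn (gaussPdf μ₁ S) M := (gaussPdf_integrable hS μ₁).integrableOn
  have hlt : ∫ y in M, gaussPdf μ₀ S y < ∫ y in M, gaussPdf μ₁ S y := by
    have hsub : 0 < ∫ y in M, (gaussPdf μ₁ S y - gaussPdf μ₀ S y) := by
      rw [MeasureTheory.setIntegral_pos_iff_support_of_nonneg_ae]
      · have hsup : M ⊆ Function.support (fun y => gaussPdf μ₁ S y - gaussPdf μ₀ S y) :=
          fun y hy => (sub_pos.mpr (hpt y hy)).ne'
        rwa [Set.inter_eq_self_of_subset_right hsup]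
      · exact (ae_restrict_iff' hMmeas).mpr
          (Filter.Eventually.of_forall fun y hy => sub_nonneg.mpr (hpt y hy).le)
      · exact hint1.sub hint0
    have := MeasureTheory.integral_sub hint1 hint0
    linarith [this ▸ hsub]
  have htot : (∫ y in M, gaussPdf μ₀ S y) + ∫ y in Mᶜ, gaussPdf μ₀ S y = 1 := by
    rw [MeasureTheory.integral_add_compl hMmeas (gaussPdf_integrable hS μ₀),
      gaussPdf_integral hS μ₀]
  refine ⟨M, hMmeas, ?_⟩
  rw [gaussMeasure_apply hS μ₀ hMmeas.compl, gaussMeasure_apply hS μ₁ hMmeas]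
  linarith

end Aux

/-- If `μ₀ ≠ μ₁`, the maximal equal-prior success probability `Φ(d/2)` (with
`d = √((μ₀-μ₁)ᵀ S⁻¹ (μ₀-μ₁))`) is strictly greater than `½`; hence some measurable decision
rule distinguishes `N(μ₀, S)` from `N(μ₁, S)` strictly better than random guessing. -/
theorem gaussian_distinguishable_better_than_guessing (T : ℕ)
    (S : Matrix (Fin T) (Fin T) ℝ) (hS : S.PosDef) (μ₀ μ₁ : Fin T → ℝ) (hμ : μ₀ ≠ μ₁) :
    1 / 2 < stdNormalCDF (Real.sqrt ((μ₀ - μ₁) ⬝ᵥ (S⁻¹ *ᵥ (μ₀ - μ₁))) / 2) ∧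
      ∃ M : Set (Fin T → ℝ), MeasurableSet M ∧
        1 / 2 < (1 / 2) * (gaussMeasure μ₀ S Mᶜ).toReal +
          (1 / 2) * (gaussMeasure μ₁ S M).toReal := by
  have hδ : μ₀ - μ₁ ≠ 0 := sub_ne_zero.mpr hμ
  have hq : 0 < (μ₀ - μ₁) ⬝ᵥ (S⁻¹ *ᵥ (μ₀ - μ₁)) := by
    simpa using hS.inv.dotProduct_mulVec_pos hδ
  constructor
  · exact stdNormalCDF_pos_half (by positivity)
  · exact main_second hS μ₀ μ₁ hμ
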